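/- The map (Q̃_{r,s}(x,y,w;θ)ξ)(u) = θ·ē(sw)·ē(η_λ(r)β(u,y))·e^{-nw/2}·ξ(e⁻ʷu + e⁻ʷx) defines a unitary representation of Ẽ on L²(ℝⁿ): each operator is an isometric surjection, and Q̃_{r,s}(g)Q̃_{r,s}(g') = Q̃_{r,s}(gg'). -/

import Mathlib

/-! `Q̃_{r,s}(x,y,w;θ)` multiplies by a unimodular phase and by `e^{-nw/2}` after composing with the
affine map `u ↦ e^{-w}u + e^{-w}x`, whose Jacobian `e^{-nw}` that factor exactly compensates in
`L²`. The composition law is a direct computation, and surjectivity follows from it: every element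
of `Ẽ` has a right inverse and `Q̃_{r,s}` of the identity is the identity. -/

open MeasureTheory

noncomputable section

/-- The standard inner product on `ℝⁿ`. -/
def beta {n : ℕ} (x y : Fin n → ℝ) : ℝ := ∑ i, x i * y i

/-- `ē(t) = e^{-2πit}`. -/
def ebar (t : ℝ) : ℂ := Complex.exp (-(2 * Real.pi * t) * Complex.I)

/-- `ē(t)` as an element of the circle group. -/
def ebarT (t : ℝ) : Circle := Circle.exp (-(2 * Real.pi * t))

/-- `η_λ(r) = (e^{2λr}-1)/(2λ)`. -/
def eta (l r : ℝ) : ℝ := (Real.exp (2 * l * r) - 1) / (2 * l)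

/-- Multiplication on `Ẽ = ℝⁿ×ℝⁿ×ℝ×𝕋`:
`(x,y,w;θ)(x',y',w';θ') = (x+eʷx', y+e⁻ʷy', w+w', θθ'ē(e⁻ʷη_λ(r)β(x,y')))`. -/
def Etmul {n : ℕ} (l r : ℝ) (a b : (Fin n → ℝ) × (Fin n → ℝ) × ℝ × Circle) :
    (Fin n → ℝ) × (Fin n → ℝ) × ℝ × Circle :=
  (a.1 + Real.exp a.2.2.1 • b.1,
   a.2.1 + Real.exp (-a.2.2.1) • b.2.1,
   a.2.2.1 + b.2.2.1,
   a.2.2.2 * b.2.2.2 * ebarT (Real.exp (-a.2.2.1) * eta l r * beta a.1 b.2.1))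

/-- The operator `Q̃_{r,s}(x,y,w;θ)` on functions on `ℝⁿ`:
`(Q̃_{r,s}(x,y,w;θ)ξ)(u) = θ·ē(sw)·ē(η_λ(r)β(u,y))·e^{-nw/2}·ξ(e⁻ʷu + e⁻ʷx)`. -/
def Qtrs {n : ℕ} (l r s : ℝ) (g : (Fin n → ℝ) × (Fin n → ℝ) × ℝ × Circle)
    (ξ : (Fin n → ℝ) → ℂ) : (Fin n → ℝ) → ℂ :=
  fun u => (g.2.2.2 : ℂ) * ebar (s * g.2.2.1) * ebar (eta l r * beta u g.2.1) *
    (Real.exp (-((n : ℝ) * g.2.2.1) / 2) : ℝ) *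
    ξ (Real.exp (-g.2.2.1) • u + Real.exp (-g.2.2.1) • g.1)

section HaarAffine

open Module

variable {E F : Type*} [NormedAddCommGroup E] [NormedSpace ℝ E] [MeasurableSpace E] [BorelSpace E]
  [FiniteDimensional ℝ E] {μ : Measure E} [μ.IsAddHaarMeasure] [NormedAddCommGroup F]

theorem MeasureTheory.MemLp.comp_smul {p : ENNReal} {f : E → F} (hf : MemLp f p μ) {R : ℝ}
    (hR : R ≠ 0) : MemLp (fun x => f (R • x)) p μ := by
  let t : E ≃ᵐ E := (Homeomorph.smul (isUnit_iff_ne_zero.2 hR).unit).toMeasurableEquiv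
  refine (t.memLp_map_measure_iff (g := f)).1 ?_
  have ht : ⇑t = (R • ·) := rfl
  rw [ht, Measure.map_addHaar_smul μ hR]
  exact hf.smul_measure ENNReal.ofReal_ne_top

theorem MeasureTheory.MemLp.comp_smul_add {p : ENNReal} {f : E → F} (hf : MemLp f p μ) {R : ℝ}
    (hR : R ≠ 0) (y : E) : MemLp (fun x => f (R • x + y)) p μ :=
  (hf.comp_measurePreserving (measurePreserving_add_right μ y)).comp_smul hR

theorem MeasureTheory.Measure.integral_comp_smul_add [NormedSpace ℝ F] (f : E → F) (R : ℝ)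
    (y : E) : ∫ x, f (R • x + y) ∂μ = |(R ^ finrank ℝ E)⁻¹| • ∫ x, f x ∂μ := by
  rw [Measure.integral_comp_smul μ (fun x => f (x + y)), integral_add_right_eq_self f y]

end HaarAffine

theorem beta_eq_dotProduct {n : ℕ} (x y : Fin n → ℝ) : beta x y = x ⬝ᵥ y := rfl

theorem norm_ebar (t : ℝ) : ‖ebar t‖ = 1 := by
  simp [ebar, Complex.norm_exp]

theorem ebar_add (a b : ℝ) : ebar (a + b) = ebar a * ebar b := by
  simp only [ebar, ← Complex.exp_add]
  congr 1
  push_cast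
  ring

theorem ebar_zero : ebar 0 = 1 := by simp [ebar]

theorem coe_ebarT (t : ℝ) : (ebarT t : ℂ) = ebar t := by
  rw [ebarT, Circle.coe_exp, ebar]
  push_cast
  ring_nf

theorem ebarT_add (a b : ℝ) : ebarT (a + b) = ebarT a * ebarT b := by
  rw [ebarT, ebarT, ebarT, ← Circle.exp_add, mul_add, neg_add]

@[fun_prop]
theorem continuous_ebar : Continuous ebar := by
  unfold ebar
  fun_prop

section Representation

variable {n : ℕ} (l r s : ℝ)

theorem norm_Qtrs_apply (g : (Fin n → ℝ) × (Fin n → ℝ) × ℝ × Circle) (ξ : (Fin n → ℝ) → ℂ)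
    (u : Fin n → ℝ) :
    ‖Qtrs l r s g ξ u‖ = Real.exp (-(n * g.2.2.1) / 2) *
      ‖ξ (Real.exp (-g.2.2.1) • u + Real.exp (-g.2.2.1) • g.1)‖ := by
  simp only [Qtrs, norm_mul, norm_ebar, Circle.norm_coe, Complex.norm_real,
    Real.norm_of_nonneg (Real.exp_nonneg _), one_mul]

theorem memLp_Qtrs {p : ENNReal} (g : (Fin n → ℝ) × (Fin n → ℝ) × ℝ × Circle)
    {ξ : (Fin n → ℝ) → ℂ} (hξ : MemLp ξ p volume) : MemLp (Qtrs l r s g ξ) p volume := by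
  have hcomp := hξ.comp_smul_add (Real.exp_ne_zero (-g.2.2.1)) (Real.exp (-g.2.2.1) • g.1)
  have hphase : Continuous fun u : Fin n → ℝ => (g.2.2.2 : ℂ) * ebar (s * g.2.2.1) *
      ebar (eta l r * beta u g.2.1) * (Real.exp (-((n : ℝ) * g.2.2.1) / 2) : ℝ) := by
    unfold beta
    fun_prop
  exact hcomp.of_le_mul (hphase.aestronglyMeasurable.mul hcomp.1)
    (.of_forall fun u => (norm_Qtrs_apply l r s g ξ u).le)

theorem integral_norm_sq_Qtrs (g : (Fin n → ℝ) × (Fin n → ℝ) × ℝ × Circle)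
    (ξ : (Fin n → ℝ) → ℂ) : ∫ u, ‖Qtrs l r s g ξ u‖ ^ 2 = ∫ u, ‖ξ u‖ ^ 2 := by
  simp_rw [norm_Qtrs_apply, mul_pow]
  rw [integral_const_mul, Measure.integral_comp_smul_add (fun v => ‖ξ v‖ ^ 2)]
  have hscale : Real.exp (-(n * g.2.2.1) / 2) ^ 2 * |(Real.exp (-g.2.2.1) ^ n)⁻¹| = 1 := by
    rw [abs_of_pos (by positivity), ← Real.exp_nat_mul, ← Real.exp_nat_mul, ← Real.exp_neg,
      ← Real.exp_add, ← Real.exp_zero]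
    congr 1
    push_cast
    ring
  rw [Module.finrank_fin_fun, smul_eq_mul, ← mul_assoc, hscale, one_mul]

theorem Qtrs_one (ξ : (Fin n → ℝ) → ℂ) : Qtrs l r s (0, 0, 0, 1) ξ = ξ := by
  funext u
  simp [Qtrs, beta, ebar_zero]

def Etinv (g : (Fin n → ℝ) × (Fin n → ℝ) × ℝ × Circle) :
    (Fin n → ℝ) × (Fin n → ℝ) × ℝ × Circle :=
  (-(Real.exp (-g.2.2.1) • g.1), -(Real.exp g.2.2.1 • g.2.1), -g.2.2.1,
    g.2.2.2⁻¹ * ebarT (eta l r * beta g.1 g.2.1))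

theorem Etmul_Etinv (g : (Fin n → ℝ) × (Fin n → ℝ) × ℝ × Circle) :
    Etmul l r g (Etinv l r g) = (0, 0, 0, 1) := by
  obtain ⟨x, y, w, θ⟩ := g
  have hβ : beta x (-(Real.exp w • y)) = -(Real.exp w * beta x y) := by
    simp only [beta_eq_dotProduct, dotProduct_neg, dotProduct_smul, smul_eq_mul]
  simp only [Etmul, Etinv, smul_neg, smul_smul, ← Real.exp_add, neg_add_cancel, add_neg_cancel,
    Real.exp_zero, one_smul, hβ, mul_inv_cancel_left, ← ebarT_add]
  have hphase : eta l r * beta x y + Real.exp (-w) * eta l r * -(Real.exp w * beta x y) = 0 := by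
    rw [Real.exp_neg]
    field_simp
    ring
  rw [hphase, ebarT, mul_zero, neg_zero, Circle.exp_zero]

theorem Qtrs_Etmul (g g' : (Fin n → ℝ) × (Fin n → ℝ) × ℝ × Circle) (ξ : (Fin n → ℝ) → ℂ) :
    Qtrs l r s g (Qtrs l r s g' ξ) = Qtrs l r s (Etmul l r g g') ξ := by
  obtain ⟨x, y, w, θ⟩ := g
  obtain ⟨x', y', w', θ'⟩ := g'
  funext u
  have harg : Real.exp (-w') • (Real.exp (-w) • u + Real.exp (-w) • x) + Real.exp (-w') • x' =
      Real.exp (-(w + w')) • u + Real.exp (-(w + w')) • (x + Real.exp w • x') := by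
    simp only [smul_add, smul_smul, ← Real.exp_add]
    rw [show -w' + -w = -(w + w') by ring, show -(w + w') + w = -w' by ring, add_assoc]
  have hβ : beta (Real.exp (-w) • u + Real.exp (-w) • x) y' =
      Real.exp (-w) * beta u y' + Real.exp (-w) * beta x y' := by
    simp only [beta_eq_dotProduct, add_dotProduct, smul_dotProduct, smul_eq_mul]
  have hβ' : beta u (y + Real.exp (-w) • y') = beta u y + Real.exp (-w) * beta u y' := by
    simp only [beta_eq_dotProduct, dotProduct_add, dotProduct_smul, smul_eq_mul]
  have hscale :
      Real.exp (-(n * (w + w')) / 2) = Real.exp (-(n * w) / 2) * Real.exp (-(n * w') / 2) := by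
    rw [← Real.exp_add]
    ring_nf
  simp only [Qtrs, Etmul, Circle.coe_mul, coe_ebarT, harg, hβ, hβ', hscale]
  rw [show Real.exp (-w) * eta l r * beta x y' = eta l r * (Real.exp (-w) * beta x y') by ring]
  simp only [mul_add, ebar_add, Complex.ofReal_mul]
  ring

theorem Qtrs_surjective (g : (Fin n → ℝ) × (Fin n → ℝ) × ℝ × Circle) :
    Function.Surjective (Qtrs l r s g) := fun ξ =>
  ⟨Qtrs l r s (Etinv l r g) ξ, by rw [Qtrs_Etmul, Etmul_Etinv, Qtrs_one]⟩

end Representation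

/-- `Q̃_{r,s}` is a unitary representation of `Ẽ` on `L²(ℝⁿ)`: each operator
is an isometric surjection on `L²` and `Q̃_{r,s}(g)Q̃_{r,s}(g') = Q̃_{r,s}(gg')`. -/
theorem stmt_13 {n : ℕ} (l r s : ℝ) :
    (∀ g : (Fin n → ℝ) × (Fin n → ℝ) × ℝ × Circle,
        Function.Surjective (Qtrs l r s g)) ∧
    (∀ (g : (Fin n → ℝ) × (Fin n → ℝ) × ℝ × Circle) (ξ : (Fin n → ℝ) → ℂ),
        MemLp ξ 2 (volume : Measure (Fin n → ℝ)) →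
        (MemLp (Qtrs l r s g ξ) 2 (volume : Measure (Fin n → ℝ)) ∧
          ∫ u, ‖Qtrs l r s g ξ u‖ ^ 2 = ∫ u, ‖ξ u‖ ^ 2)) ∧
    (∀ (g g' : (Fin n → ℝ) × (Fin n → ℝ) × ℝ × Circle) (ξ : (Fin n → ℝ) → ℂ),
        Qtrs l r s g (Qtrs l r s g' ξ) = Qtrs l r s (Etmul l r g g') ξ) :=
  ⟨Qtrs_surjective l r s,
    fun g ξ hξ => ⟨memLp_Qtrs l r s g hξ, integral_norm_sq_Qtrs l r s g ξ⟩,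
    Qtrs_Etmul l r s⟩
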